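/- Fix an integer m ≥ 2 and k ∈ ℕ. For each n ∈ ℕ with 0 ≤ n < F_k^{(m)}, let r(n) ∈ {0,…,m−1} be the unique integer with ε_{k−1}(n) = ⋯ = ε_{k−r(n)}(n) = 1 and ε_{k−r(n)−1}(n) = 0, set μ_k(n) = Σ_{j=0}^{k−1} ε_{k−1−j}(n) φ_m^j, and let I(n) = [μ_k(n)/φ_m^k, (μ_k(n) + φ_m^{r(n)} − Σ_{i=0}^{r(n)−1} φ_m^i)/φ_m^k). Then the intervals I(n), 0 ≤ n < F_k^{(m)}, are pairwise disjoint and their union equals [0,1); i.e. the collection C_k^{(m)} = {I(n) : 0 ≤ n < F_k^{(m)}} forms a partition of [0,1). -/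

import Mathlib

open MeasureTheory Filter Set

namespace Mbon

/-- The `m`-bonacci sequence `F m`. -/
noncomputable def F (m : ℕ) : ℕ → ℕ := fun k =>
  Nat.strongRecOn k fun k ih =>
    if h : k < m then 2 ^ k
    else ∑ j ∈ (Finset.range m).attach,
      ih (k - (j : ℕ) - 1) (by have := Finset.mem_range.mp j.2; omega)

/-- `ε : ℕ → ℕ` is the (unique) greedy digit string of `n` in the `m`-bonacci
numeration system: digits in `{0,1}`, finitely many nonzero digits, no `m`
consecutive digits all equal to `1`, and the digits represent `n`. -/
def IsGreedy (m n : ℕ) (ε : ℕ → ℕ) : Prop :=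
  (∀ j, ε j ≤ 1) ∧
  (∀ j, ¬ (∀ i, i < m → ε (j + i) = 1)) ∧
  (∃ J, (∀ j, J ≤ j → ε j = 0) ∧ n = ∑ j ∈ Finset.range J, ε j * F m j)

/-- digits indexed by `ℤ`, with the convention `ε_j = 0` for `j < 0`. -/
def digZ (ε : ℕ → ℕ) (j : ℤ) : ℕ := if 0 ≤ j then ε j.toNat else 0

/-- `r` is such that `ε_{k-1} = ⋯ = ε_{k-r} = 1` and `ε_{k-r-1} = 0`. -/
def RunLen (m : ℕ) (ε : ℕ → ℕ) (k r : ℕ) : Prop :=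
  r < m ∧ (∀ i : ℕ, 1 ≤ i → i ≤ r → digZ ε ((k : ℤ) - i) = 1) ∧
    digZ ε ((k : ℤ) - r - 1) = 0

/-- `φ` is the `m`-bonacci number: the real root `> 1` of `x^m = x^{m-1}+⋯+x+1`. -/
def IsPhi (m : ℕ) (φ : ℝ) : Prop := 1 < φ ∧ φ ^ m = ∑ i ∈ Finset.range m, φ ^ i

/-- the `φ`-adic van der Corput value `V_φ(n) = Σ_j ε_j(n) φ^{-j-1}`. -/
noncomputable def VdC (φ : ℝ) (ε : ℕ → ℕ) : ℝ := ∑' j : ℕ, (ε j : ℝ) * φ ^ (-(j : ℤ) - 1)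

/-- `μ_k = Σ_{j=0}^{k-1} ε_{k-1-j} φ^j`. -/
noncomputable def muk (φ : ℝ) (ε : ℕ → ℕ) (k : ℕ) : ℝ :=
  ∑ j ∈ Finset.range k, (ε (k - 1 - j) : ℝ) * φ ^ j

/-- `ν_k = Σ_{j=0}^{k-1} ε_j F_j^{(m)}`. -/
noncomputable def nuk (m : ℕ) (ε : ℕ → ℕ) (k : ℕ) : ℕ := ∑ j ∈ Finset.range k, ε j * F m j

/-- The substitution `σ_m` on the alphabet `Fin m` (`0`-based; the letter `i+1`
of the paper corresponds to `i : Fin m`): `σ(i) = 1(i+1)` for `i < m`, `σ(m) = 1`. -/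
def sub {m : ℕ} (i : Fin m) : List (Fin m) :=
  if h : (i : ℕ) + 1 < m then [⟨0, i.pos⟩, ⟨(i : ℕ) + 1, h⟩] else [⟨0, i.pos⟩]

/-- extension of `σ_m` to words. -/
def subw {m : ℕ} (w : List (Fin m)) : List (Fin m) := w.flatMap sub

/-- `σ_m^k(1)`, a prefix of the infinite fixed point of `σ_m`. -/
def fixWord (m : ℕ) (k : ℕ) : List (Fin m) :=
  subw^[k] (if h : 0 < m then [⟨0, h⟩] else [])

/-- abelianization `l(w)` of a word, as a vector in `ℝ^m`. -/
noncomputable def ab {m : ℕ} (w : List (Fin m)) : Fin m → ℝ := fun i => (w.count i : ℝ)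

/-- The incidence matrix `B_m` of `σ_m`; its `(i,j)` entry is `|σ_m(j)|_i`. -/
noncomputable def B (m : ℕ) : Matrix (Fin m) (Fin m) ℝ :=
  Matrix.of fun i j => ((sub j).count i : ℝ)

/-- `u` is a right eigenvector of `B_m` for the eigenvalue `φ`. -/
def IsRightEv (m : ℕ) (φ : ℝ) (u : Fin m → ℝ) : Prop := u ≠ 0 ∧ (B m).mulVec u = φ • u

/-- `v` is a left eigenvector of `B_m` for the eigenvalue `φ`. -/
def IsLeftEv (m : ℕ) (φ : ℝ) (v : Fin m → ℝ) : Prop := v ≠ 0 ∧ (B m).vecMul v = φ • v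

/-- the projection `π_c` onto `v^⊥` along `u`. -/
noncomputable def proj {m : ℕ} (u v : Fin m → ℝ) (x : Fin m → ℝ) : Fin m → ℝ :=
  x - ((∑ i, v i * x i) / (∑ i, v i * u i)) • u

/-- the hyperplane `v^⊥ = {x : ⟨v,x⟩ = 0}`. -/
def vperp {m : ℕ} (v : Fin m → ℝ) : Set (Fin m → ℝ) := {x | ∑ i, v i * x i = 0}

/-- standard basis vector `e_{i+1}` of `ℝ^m`. -/
def stdb {m : ℕ} (i : Fin m) : Fin m → ℝ := Pi.single i 1

/-- the first standard basis vector `e_1` of `ℝ^m`. -/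
def e1 (m : ℕ) : Fin m → ℝ := fun j => if (j : ℕ) = 0 then 1 else 0

/-- the lattice `L_m = ⟨π_c(e_1-e_2),…,π_c(e_1-e_m)⟩_ℤ`. -/
def latt {m : ℕ} (u v : Fin m → ℝ) : AddSubgroup (Fin m → ℝ) :=
  AddSubgroup.closure {x | ∃ i : Fin m, (i : ℕ) ≠ 0 ∧ x = proj u v (e1 m - stdb i)}

/-- a fundamental mesh of the lattice `L_m`. -/
def mesh {m : ℕ} (u v : Fin m → ℝ) : Set (Fin m → ℝ) :=
  {x | ∃ t : Fin m → ℝ, (∀ i, 0 ≤ t i ∧ t i < 1) ∧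
    x = ∑ i ∈ Finset.univ.filter (fun i : Fin m => (i : ℕ) ≠ 0),
      t i • proj u v (e1 m - stdb i)}

/-- the Lebesgue measure `λ_v` on `v^⊥`, normalized so that a fundamental mesh of
`L_m` has measure `1` (realized as normalized `(m-1)`-dimensional Hausdorff measure). -/
noncomputable def lamv (m : ℕ) (u v : Fin m → ℝ) : Measure (Fin m → ℝ) :=
  (μH[(m : ℝ) - 1] (mesh u v))⁻¹ • μH[(m : ℝ) - 1]

/-- the subtile `R_m(i)` of the Rauzy fractal. -/
noncomputable def Rtile {m : ℕ} (u v : Fin m → ℝ) (i : Fin m) : Set (Fin m → ℝ) :=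
  closure {x | ∃ (k : ℕ) (p s : List (Fin m)),
    fixWord m k = p ++ i :: s ∧ x = proj u v (ab p)}

/-- the Rauzy fractal `R_m` of `σ_m`. -/
noncomputable def Rfrac {m : ℕ} (u v : Fin m → ℝ) : Set (Fin m → ℝ) :=
  closure {x | ∃ (k : ℕ) (p s : List (Fin m)),
    fixWord m k = p ++ s ∧ x = proj u v (ab p)}

/-- interior of `A` relative to the subspace `V`. -/
def relInterior {X : Type*} [TopologicalSpace X] (V A : Set X) : Set X :=
  Subtype.val '' interior (Subtype.val ⁻¹' A : Set V)

/-- boundary of `A` relative to the subspace `V`. -/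
def relFrontier {X : Type*} [TopologicalSpace X] (V A : Set X) : Set X :=
  Subtype.val '' frontier (Subtype.val ⁻¹' A : Set V)

/-- minimal number of sets of diameter `≤ δ` needed to cover `A`. -/
noncomputable def coverNum {X : Type*} [PseudoMetricSpace X] (A : Set X) (δ : ℝ) : ℕ :=
  sInf {n : ℕ | ∃ f : Fin n → Set X, (∀ i, Metric.diam (f i) ≤ δ) ∧ A ⊆ ⋃ i, f i}

/-- the (upper) box counting dimension. -/
noncomputable def dimB {X : Type*} [PseudoMetricSpace X] (A : Set X) : ℝ :=
  Filter.limsup (fun δ : ℝ => Real.log (coverNum A δ) / Real.log (1 / δ))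
    (nhdsWithin 0 (Set.Ioi 0))

/-- the one-dimensional star discrepancy `D_N`. -/
noncomputable def starDisc1 (y : ℕ → ℝ) (N : ℕ) : ℝ :=
  sSup {d : ℝ | ∃ ω : ℝ, 0 < ω ∧ ω ≤ 1 ∧
    d = |(∑ n ∈ Finset.range N,
        Set.indicator (Set.Ico 0 ω) (fun _ => (1 : ℝ)) (y n)) / N - ω|}

/-- the `s`-dimensional star discrepancy `D_N`. -/
noncomputable def starDisc {s : ℕ} (y : ℕ → Fin s → ℝ) (N : ℕ) : ℝ :=
  sSup {d : ℝ | ∃ ω : Fin s → ℝ, (∀ i, 0 < ω i ∧ ω i ≤ 1) ∧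
    d = |(∑ n ∈ Finset.range N,
        Set.indicator (Set.univ.pi fun i => Set.Ico (0 : ℝ) (ω i)) (fun _ => (1 : ℝ)) (y n)) / N -
      ∏ i, ω i|}

/-- `i_0 →^{p_0} i_1 →^{p_1} ⋯ →^{p_{k-1}} i_k` is a walk of length `k` in the
prefix-suffix graph `G_{σ_m}`: for each step there is an edge from `i_t` to
`i_{t+1}` labelled `(p_t, i_t, s_t)`, i.e. `σ_m(i_{t+1}) = p_t i_t s_t`. -/
def IsWalk {m : ℕ} (k : ℕ) (i : Fin (k + 1) → Fin m) (p : Fin k → List (Fin m)) : Prop :=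
  ∀ t : Fin k, ∃ s : List (Fin m), sub (i t.succ) = p t ++ i t.castSucc :: s

/-- the collection `S_k^{(m)}` of level-`k` subtiles
`B_m^k R_m(i_k) + π_c l(σ_m^{k-1}(p_{k-1})⋯σ_m(p_1)p_0)` of the Rauzy fractal. -/
noncomputable def levelTiles (m k : ℕ) (u v : Fin m → ℝ) : Set (Set (Fin m → ℝ)) :=
  {S | ∃ (i : Fin (k + 1) → Fin m) (p : Fin k → List (Fin m)), IsWalk k i p ∧
    S = (fun x => (B m ^ k).mulVec x +
          ∑ t : Fin k, proj u v (ab (subw^[(t : ℕ)] (p t)))) '' Rtile u v (i (Fin.last k))}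

/-- the saturation `S + L_m` of a set `S` by the lattice `L_m`. -/
def satur {m : ℕ} (u v : Fin m → ℝ) (S : Set (Fin m → ℝ)) : Set (Fin m → ℝ) :=
  {x | ∃ y ∈ S, ∃ l ∈ latt u v, x = y + l}


/-!
Write digit strings least significant digit first. The admissible strings are listed in increasing
order by an odometer: if `b = 1^ρ 0 (1^{m-1} 0)^t w` with `w` not starting with `1^{m-1}`, its
successor is `0^{ρ + m t} 1 w`. The `φ`-weights and the `m`-bonacci weights satisfy the same
recurrence, so the full blocks telescope: one step raises the `m`-bonacci value by `1` and the
`φ`-value by exactly `φ^ρ - ∑_{i<ρ} φ^i`, the length of the cell of `b`. Hence the `t`-th string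
owns `[V t, V (t + 1))`, `V` being the partial sums of these lengths, and the walk ends at `φ^k`.
Read backwards, the strings of length `k` are the greedy expansions of `0, …, F_k - 1`, and their
`φ`-values are the `μ_k`.
-/

lemma F_def (m k : ℕ) :
    F m k = if k < m then 2 ^ k else ∑ j ∈ Finset.range m, F m (k - j - 1) := by
  rw [F, Nat.strongRecOn_eq]
  split_ifs
  · rfl
  · exact Finset.sum_attach (Finset.range m) fun j => F m (k - j - 1)

lemma F_of_lt {m k : ℕ} (h : k < m) : F m k = 2 ^ k := by
  simp [F_def, h]

lemma F_add (m q : ℕ) : F m (q + m) = ∑ i ∈ Finset.range m, F m (q + i) := by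
  rw [F_def, if_neg (by omega), ← Finset.sum_range_reflect]
  refine Finset.sum_congr rfl fun i hi => ?_
  rw [Finset.mem_range] at hi
  congr 1
  omega

lemma F_of_lt_eq_sum_add_one {m k : ℕ} (h : k < m) :
    F m k = ∑ i ∈ Finset.range k, F m i + 1 := by
  induction k with
  | zero => simp [F_of_lt h]
  | succ k ih =>
    have ih' := ih (by omega)
    rw [F_of_lt (by omega)] at ih'
    rw [Finset.sum_range_succ, F_of_lt h, F_of_lt (show k < m by omega), pow_succ]
    omega

lemma F_mono {m : ℕ} (hm : 0 < m) : Monotone (F m) := by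
  refine monotone_nat_of_le_succ fun k => ?_
  by_cases h : k + 1 < m
  · rw [F_of_lt h, F_of_lt (by omega)]
    exact Nat.pow_le_pow_right (by norm_num) (by omega)
  · obtain ⟨q, hq⟩ : ∃ q, k + 1 = q + m := ⟨k + 1 - m, by omega⟩
    rw [hq, F_add]
    have hk : k = q + (m - 1) := by omega
    rw [hk]
    exact Finset.single_le_sum (f := fun i => F m (q + i)) (fun _ _ => Nat.zero_le _)
      (by simpa using hm)

lemma sum_Ico_F_le {m a K : ℕ} (hK : K ≤ a + m) : ∑ i ∈ Finset.Ico a K, F m i ≤ F m K := by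
  by_cases h : K < m
  · calc ∑ i ∈ Finset.Ico a K, F m i ≤ ∑ i ∈ Finset.range K, F m i :=
          Finset.sum_le_sum_of_subset (by
            rw [Finset.range_eq_Ico]; exact Finset.Ico_subset_Ico_left (Nat.zero_le a))
      _ ≤ F m K := by rw [F_of_lt_eq_sum_add_one h]; omega
  · obtain ⟨q, rfl⟩ : ∃ q, K = q + m := ⟨K - m, by omega⟩
    calc ∑ i ∈ Finset.Ico a (q + m), F m i ≤ ∑ i ∈ Finset.Ico q (q + m), F m i :=
          Finset.sum_le_sum_of_subset (Finset.Ico_subset_Ico_left (by omega))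
      _ = F m (q + m) := by rw [F_add, Finset.sum_Ico_eq_sum_range, Nat.add_sub_cancel_left]

def Admissible (m : ℕ) (b : ℕ → ℕ) : Prop :=
  (∀ j, b j ≤ 1) ∧ ∀ j, ¬ ∀ i, i < m → b (j + i) = 1

def digitVal {R : Type*} [Semiring R] (a : ℕ → R) (b : ℕ → ℕ) (K : ℕ) : R :=
  ∑ j ∈ Finset.range K, (b j : R) * a j

section digitVal

variable {R : Type*} [Semiring R] {a : ℕ → R} {b : ℕ → ℕ}

lemma digitVal_succ (a : ℕ → R) (b : ℕ → ℕ) (K : ℕ) :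
    digitVal a b (K + 1) = digitVal a b K + b K * a K :=
  Finset.sum_range_succ _ _

lemma digitVal_add_sum_Ico {z K : ℕ} (h : z ≤ K) :
    digitVal a b z + ∑ j ∈ Finset.Ico z K, (b j : R) * a j = digitVal a b K :=
  Finset.sum_range_add_sum_Ico _ h

lemma digitVal_of_le {J K : ℕ} (hJ : ∀ j, J ≤ j → b j = 0) (hJK : J ≤ K) :
    digitVal a b K = digitVal a b J := by
  rw [← digitVal_add_sum_Ico hJK, Finset.sum_eq_zero fun j hj => ?_, add_zero]
  rw [hJ j (Finset.mem_Ico.mp hj).1, Nat.cast_zero, zero_mul]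

end digitVal

section Admissible

variable {m : ℕ} {b : ℕ → ℕ}

lemma Admissible.pos (hb : Admissible m b) : 0 < m := by
  by_contra h
  exact hb.2 0 fun i hi => absurd hi (by omega)

lemma Admissible.eq_one_of_ne_zero (hb : Admissible m b) {j : ℕ} (h : b j ≠ 0) : b j = 1 := by
  have := hb.1 j
  omega

lemma Admissible.top_run (hb : Admissible m b) (K : ℕ) :
    (K < m ∧ ∀ j < K, b j = 1) ∨
      ∃ z < K, b z = 0 ∧ K ≤ z + m ∧ ∀ j, z < j → j < K → b j = 1 := by
  have hm := hb.pos
  induction K with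
  | zero => exact Or.inl ⟨hm, fun j hj => absurd hj (by omega)⟩
  | succ K ih =>
    by_cases hK : b K = 0
    · exact Or.inr ⟨K, by omega, hK, by omega, fun j h1 h2 => absurd h2 (by omega)⟩
    have hK1 := hb.eq_one_of_ne_zero hK
    rcases ih with ⟨-, hones⟩ | ⟨z, hzK, hz, -, hones⟩
    · have hall : ∀ j < K + 1, b j = 1 := fun j hj =>
        (Nat.lt_succ_iff_lt_or_eq.mp hj).elim (hones j) fun e => e ▸ hK1
      exact Or.inl ⟨not_le.mp fun h => hb.2 0 fun i hi => by simpa using hall i (by omega), hall⟩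
    · have hall : ∀ j, z < j → j < K + 1 → b j = 1 := fun j h1 h2 =>
        (Nat.lt_succ_iff_lt_or_eq.mp h2).elim (hones j h1) fun e => e ▸ hK1
      exact Or.inr ⟨z, by omega, hz,
        not_lt.mp fun h => hb.2 (z + 1) fun i hi => hall _ (by omega) (by omega), hall⟩

lemma Admissible.digitVal_lt (hb : Admissible m b) (K : ℕ) : digitVal (F m) b K < F m K := by
  induction K using Nat.strong_induction_on with
  | _ K ih =>
  rcases hb.top_run K with ⟨hKm, hones⟩ | ⟨z, hzK, hz, hzm, hones⟩
  · have : digitVal (F m) b K = ∑ i ∈ Finset.range K, F m i :=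
      Finset.sum_congr rfl fun j hj => by simp [hones j (Finset.mem_range.mp hj)]
    rw [this, F_of_lt_eq_sum_add_one hKm]
    omega
  · have htop : ∑ j ∈ Finset.Ico z K, b j * F m j = ∑ j ∈ Finset.Ico (z + 1) K, F m j := by
      rw [Finset.sum_eq_sum_Ico_succ_bot hzK, hz, zero_mul, zero_add]
      exact Finset.sum_congr rfl fun j hj => by
        simp [hones j (by simp at hj; omega) (Finset.mem_Ico.mp hj).2]
    calc digitVal (F m) b K = digitVal (F m) b z + ∑ j ∈ Finset.Ico (z + 1) K, F m j := by
          rw [← digitVal_add_sum_Ico hzK.le, ← htop]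
          rfl
      _ < F m z + ∑ j ∈ Finset.Ico (z + 1) K, F m j := by
          have := ih z hzK
          omega
      _ = ∑ j ∈ Finset.Ico z K, F m j := (Finset.sum_eq_sum_Ico_succ_bot hzK _).symm
      _ ≤ F m K := sum_Ico_F_le hzm

lemma Admissible.eq_of_digitVal_eq {b' : ℕ → ℕ} (hb : Admissible m b) (hb' : Admissible m b')
    {K : ℕ} (h : digitVal (F m) b K = digitVal (F m) b' K) : ∀ j < K, b j = b' j := by
  induction K with
  | zero => intro j hj; omega
  | succ K ih =>
    rw [digitVal_succ, digitVal_succ] at h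
    have hK : b K = b' K := by
      have h1 := hb.digitVal_lt K
      have h2 := hb'.digitVal_lt K
      rcases Nat.le_one_iff_eq_zero_or_eq_one.mp (hb.1 K) with e | e <;>
        rcases Nat.le_one_iff_eq_zero_or_eq_one.mp (hb'.1 K) with e' | e' <;>
        simp only [e, e', Nat.cast_id, zero_mul, one_mul, add_zero] at h ⊢ <;> omega
    rw [hK, Nat.add_right_cancel_iff] at h
    exact fun j hj => (Nat.lt_succ_iff_lt_or_eq.mp hj).elim (ih h j) fun e => e ▸ hK

end Admissible

lemma isGreedy_iff {m n : ℕ} {b : ℕ → ℕ} :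
    IsGreedy m n b ↔ Admissible m b ∧ ∃ J, (∀ j, J ≤ j → b j = 0) ∧ digitVal (F m) b J = n := by
  simp only [IsGreedy, Admissible, digitVal, Nat.cast_id, and_assoc, eq_comm (a := n)]

lemma IsGreedy.unique {m n : ℕ} {b b' : ℕ → ℕ} (h : IsGreedy m n b) (h' : IsGreedy m n b') :
    b = b' := by
  obtain ⟨hb, J, hJ, hv⟩ := isGreedy_iff.mp h
  obtain ⟨hb', J', hJ', hv'⟩ := isGreedy_iff.mp h'
  funext j
  refine hb.eq_of_digitVal_eq hb' (K := max J J' + j + 1) ?_ j (by omega)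
  rw [digitVal_of_le hJ (by omega), digitVal_of_le hJ' (by omega), hv, hv']

/-- For admissible `b`, the length of the run of ones at the bottom of `b`. -/
noncomputable def firstZero (b : ℕ → ℕ) : ℕ := sInf {j | b j = 0}

def FullBlock (m : ℕ) (b : ℕ → ℕ) (j : ℕ) : Prop := ∀ i, 1 ≤ i → i < m → b (j + i) = 1

noncomputable def carryIdx (m : ℕ) (b : ℕ → ℕ) : ℕ :=
  sInf {p | ¬ FullBlock m b (firstZero b + m * p)}

noncomputable def carryPos (m : ℕ) (b : ℕ → ℕ) : ℕ := firstZero b + m * carryIdx m b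

noncomputable def succDigits (m : ℕ) (b : ℕ → ℕ) : ℕ → ℕ := fun j =>
  if j < carryPos m b then 0 else if j = carryPos m b then 1 else b j

noncomputable def odometer (m t : ℕ) : ℕ → ℕ := (succDigits m)^[t] 0

section Carry

variable {m : ℕ} {b : ℕ → ℕ}

lemma Admissible.firstZero_lt (hb : Admissible m b) : firstZero b < m := by
  obtain ⟨i, hi, hbi⟩ : ∃ i < m, b i ≠ 1 := by simpa using hb.2 0
  exact lt_of_le_of_lt (Nat.sInf_le (by have := hb.1 i; simp; omega)) hi

lemma Admissible.firstZero_eq_zero (hb : Admissible m b) : b (firstZero b) = 0 :=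
  Nat.sInf_mem (s := {j | b j = 0}) <| by
    obtain ⟨i, -, hbi⟩ : ∃ i < m, b i ≠ 1 := by simpa using hb.2 0
    exact ⟨i, by have := hb.1 i; simp; omega⟩

lemma Admissible.eq_one_of_lt_firstZero (hb : Admissible m b) {i : ℕ} (hi : i < firstZero b) :
    b i = 1 :=
  hb.eq_one_of_ne_zero (Nat.notMem_of_lt_sInf (s := {j | b j = 0}) hi)

lemma fullBlock_of_lt_carryIdx {p : ℕ} (hp : p < carryIdx m b) :
    FullBlock m b (firstZero b + m * p) :=
  not_not.mp (Nat.notMem_of_lt_sInf hp)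

lemma not_fullBlock_carryPos (hm : 2 ≤ m) {K : ℕ} (hK : ∀ j, K ≤ j → b j = 0) :
    ¬ FullBlock m b (carryPos m b) :=
  Nat.sInf_mem (s := {p | ¬ FullBlock m b (firstZero b + m * p)})
    ⟨K, fun h => by have := h 1 le_rfl hm; rw [hK _ (by nlinarith)] at this; omega⟩

lemma Admissible.eq_zero_of_le_carryIdx (hb : Admissible m b) {p : ℕ} (hp : p ≤ carryIdx m b) :
    b (firstZero b + m * p) = 0 := by
  obtain _ | p := p
  · simpa using hb.firstZero_eq_zero
  by_contra h
  have hfull := fullBlock_of_lt_carryIdx (m := m) (b := b) (p := p) (by omega)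
  refine hb.2 (firstZero b + m * p + 1) fun i hi => ?_
  rcases Nat.lt_or_ge (i + 1) m with h' | h'
  · simpa [add_assoc, add_comm 1 i] using hfull (i + 1) (by omega) h'
  · have : firstZero b + m * p + 1 + i = firstZero b + m * (p + 1) := by rw [mul_add]; omega
    rw [this]
    exact hb.eq_one_of_ne_zero h

lemma carryPos_le (hm : 2 ≤ m) (hb : Admissible m b) {K : ℕ} (hK : ∀ j, K ≤ j → b j = 0) :
    carryPos m b ≤ K := by
  unfold carryPos
  obtain h | ⟨t, ht⟩ : carryIdx m b = 0 ∨ ∃ t, carryIdx m b = t + 1 :=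
    (carryIdx m b).eq_zero_or_eq_succ_pred.imp id fun h => ⟨_, h⟩
  · rw [h, mul_zero, add_zero]
    by_contra hlt
    have := hb.eq_one_of_lt_firstZero (show K < firstZero b by omega)
    rw [hK K le_rfl] at this
    omega
  · have := fullBlock_of_lt_carryIdx (m := m) (b := b) (p := t) (by omega) (m - 1)
      (by omega) (by omega)
    by_contra hlt
    rw [hK _ (by rw [ht, mul_add] at hlt; omega)] at this
    omega

lemma admissible_succDigits (hm : 2 ≤ m) (hb : Admissible m b) {K : ℕ}
    (hK : ∀ j, K ≤ j → b j = 0) : Admissible m (succDigits m b) := by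
  have hval : ∀ j, carryPos m b < j → succDigits m b j = b j := fun j hj => by
    simp [succDigits, not_lt.mpr hj.le, hj.ne']
  refine ⟨fun j => by unfold succDigits; split_ifs <;> simp [hb.1 j], fun j hrun => ?_⟩
  rcases lt_trichotomy j (carryPos m b) with h | rfl | h
  · simpa [succDigits, h] using hrun 0 hb.pos
  · exact not_fullBlock_carryPos hm hK fun i h1 h2 => by rw [← hval _ (by omega)]; exact hrun i h2
  · exact hb.2 j fun i hi => by rw [← hval _ (by omega)]; exact hrun i hi

end Carry

section Telescoping

variable {R : Type*} [Semiring R] {a : ℕ → R} {m : ℕ} {b : ℕ → ℕ}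

lemma digitVal_carryPos_add (hrec : ∀ q, a (q + m) = ∑ i ∈ Finset.range m, a (q + i))
    (hb : Admissible m b) :
    digitVal a b (carryPos m b) + a (firstZero b) =
      ∑ i ∈ Finset.range (firstZero b), a i + a (carryPos m b) := by
  suffices ∀ p ≤ carryIdx m b, digitVal a b (firstZero b + m * p) + a (firstZero b) =
      ∑ i ∈ Finset.range (firstZero b), a i + a (firstZero b + m * p) from this _ le_rfl
  intro p hp
  induction p with
  | zero =>
    simp only [mul_zero, add_zero]
    congr 1
    exact Finset.sum_congr rfl fun i hi => by
      simp [hb.eq_one_of_lt_firstZero (Finset.mem_range.mp hi)]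
  | succ p ih =>
    set x := firstZero b + m * p
    have hx : firstZero b + m * (p + 1) = x + m := by ring
    have hblock : ∑ i ∈ Finset.range m, (b (x + i) : R) * a (x + i) + a x = a (x + m) := by
      obtain ⟨m', rfl⟩ : ∃ m', m = m' + 1 := ⟨m - 1, by have := hb.pos; omega⟩
      have hfull := fullBlock_of_lt_carryIdx (m := m' + 1) (b := b) (p := p) (by omega)
      have hx0 : b x = 0 := hb.eq_zero_of_le_carryIdx (by omega)
      rw [hrec, Finset.sum_range_succ', Finset.sum_range_succ' (fun i => a (x + i))]
      rw [add_zero, hx0, Nat.cast_zero, zero_mul, add_zero]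
      refine congrArg (· + a x) (Finset.sum_congr rfl fun i hi => ?_)
      have : b (x + (i + 1)) = 1 := hfull (i + 1) (by omega) (by simpa using hi)
      rw [this, Nat.cast_one, one_mul]
    rw [hx, ← hblock, digitVal, Finset.sum_range_add, ← digitVal, add_right_comm, ih (by omega)]
    abel

lemma digitVal_succDigits_add (hrec : ∀ q, a (q + m) = ∑ i ∈ Finset.range m, a (q + i))
    (hb : Admissible m b) {K : ℕ} (hK : carryPos m b < K) :
    digitVal a b K + a (firstZero b) =
      ∑ i ∈ Finset.range (firstZero b), a i + digitVal a (succDigits m b) K := by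
  set q := carryPos m b
  have htail : ∑ j ∈ Finset.Ico (q + 1) K, (b j : R) * a j =
      ∑ j ∈ Finset.Ico (q + 1) K, (succDigits m b j : R) * a j :=
    Finset.sum_congr rfl fun j hj => by
      have := (Finset.mem_Ico.mp hj).1
      simp [succDigits, show ¬ j < carryPos m b by omega, show j ≠ carryPos m b by omega]
  have hlow : digitVal a (succDigits m b) q = 0 :=
    Finset.sum_eq_zero fun j hj => by simp [succDigits, q, Finset.mem_range.mp hj]
  have hq : b q = 0 := hb.eq_zero_of_le_carryIdx le_rfl
  have hsq : succDigits m b q = 1 := by simp [succDigits, q]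
  rw [← digitVal_add_sum_Ico (z := q + 1) hK,
    ← digitVal_add_sum_Ico (z := q + 1) (b := succDigits m b) hK, ← htail, digitVal_succ,
    digitVal_succ, hlow, hq, hsq, Nat.cast_zero, zero_mul, add_zero, Nat.cast_one, one_mul,
    zero_add, add_right_comm, digitVal_carryPos_add hrec hb]
  abel

end Telescoping

lemma isGreedy_of_admissible {m : ℕ} {b : ℕ → ℕ} (hb : Admissible m b) {J : ℕ}
    (hJ : ∀ j, J ≤ j → b j = 0) : IsGreedy m (digitVal (F m) b J) b :=
  isGreedy_iff.mpr ⟨hb, J, hJ, rfl⟩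

lemma odometer_succ (m t : ℕ) : odometer m (t + 1) = succDigits m (odometer m t) :=
  Function.iterate_succ_apply' _ _ _

section Odometer

variable {m : ℕ}

lemma admissible_odometer (hm : 2 ≤ m) (t : ℕ) :
    Admissible m (odometer m t) ∧ ∀ j, t ≤ j → odometer m t j = 0 := by
  induction t with
  | zero =>
    exact ⟨⟨fun _ => by simp [odometer], fun j h => by simpa [odometer] using h 0 (by omega)⟩,
      fun _ _ => rfl⟩
  | succ t ih =>
    have hq := carryPos_le hm ih.1 ih.2
    rw [odometer_succ]
    refine ⟨admissible_succDigits hm ih.1 ih.2, fun j hj => ?_⟩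
    simp [succDigits, show ¬ j < carryPos m (odometer m t) by omega,
      show j ≠ carryPos m (odometer m t) by omega, ih.2 j (by omega)]

lemma digitVal_F_odometer (hm : 2 ≤ m) {t K : ℕ} (hK : t ≤ K) :
    digitVal (F m) (odometer m t) K = t := by
  induction t generalizing K with
  | zero => simp [odometer, digitVal]
  | succ t ih =>
    obtain ⟨hb, hsupp⟩ := admissible_odometer hm t
    have h := digitVal_succDigits_add (F_add m) hb
      (K := K) (by have := carryPos_le hm hb hsupp; omega)
    rw [F_of_lt_eq_sum_add_one hb.firstZero_lt, ih (by omega), ← odometer_succ] at h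
    omega

lemma isGreedy_odometer (hm : 2 ≤ m) (t : ℕ) : IsGreedy m t (odometer m t) := by
  obtain ⟨hb, hsupp⟩ := admissible_odometer hm t
  simpa only [digitVal_F_odometer hm le_rfl] using isGreedy_of_admissible hb hsupp

lemma odometer_injective (hm : 2 ≤ m) : Function.Injective (odometer m) := fun t t' h => by
  rw [← digitVal_F_odometer hm (t := t) (K := t + t') (by omega), h,
    digitVal_F_odometer hm (by omega)]

lemma odometer_F (hm : 2 ≤ m) (k : ℕ) : odometer m (F m k) = fun j => if j = k then 1 else 0 := by
  refine (isGreedy_odometer hm _).unique ?_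
  have hadm : Admissible m fun j => if j = k then 1 else 0 :=
    ⟨fun j => by dsimp only; split_ifs <;> simp, fun j h => by
      have h0 := h 0 (by omega)
      have h1 := h 1 (by omega)
      dsimp only at h0 h1
      split_ifs at h0 h1
      omega⟩
  convert isGreedy_of_admissible hadm (J := k + 1) fun j hj => if_neg (by omega)
  simp [digitVal, Finset.sum_ite_eq']

lemma odometer_eq_zero_of_lt_F (hm : 2 ≤ m) {t k : ℕ} (ht : t < F m k) {j : ℕ} (hj : k ≤ j) :
    odometer m t j = 0 := by
  obtain ⟨hb, -⟩ := admissible_odometer hm t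
  by_contra h
  have hle : F m j ≤ digitVal (F m) (odometer m t) (j + 1 + t) := by
    refine le_trans ?_ (Finset.single_le_sum (f := fun i => (odometer m t i : ℕ) * F m i)
      (fun _ _ => Nat.zero_le _) (Finset.mem_range.mpr (by omega : j < j + 1 + t)))
    simp [hb.eq_one_of_ne_zero h]
  rw [digitVal_F_odometer hm (by omega)] at hle
  have := F_mono (m := m) (by omega) hj
  omega

end Odometer

section Phi

variable {m : ℕ} {φ : ℝ}

lemma IsPhi.pow_add_eq_sum (hφ : IsPhi m φ) (q : ℕ) :
    φ ^ (q + m) = ∑ i ∈ Finset.range m, φ ^ (q + i) := by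
  rw [pow_add, hφ.2, Finset.mul_sum]
  simp only [← pow_add]

lemma IsPhi.sum_range_pow_lt (hφ : IsPhi m φ) {r : ℕ} (hr : r < m) :
    ∑ i ∈ Finset.range r, φ ^ i < φ ^ r := by
  have h1 := hφ.1
  have hgeom := geom_sum_mul φ m
  rw [← hφ.2] at hgeom
  have hφm : φ ^ m * (2 - φ) = 1 := by linarith
  have h2 : 0 < 2 - φ := by
    by_contra h
    nlinarith [pow_pos (zero_lt_one.trans h1) m]
  have h3 : φ ^ r * (2 - φ) < 1 :=
    hφm ▸ mul_lt_mul_of_pos_right (pow_lt_pow_right₀ h1 hr) h2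
  have h4 : (∑ i ∈ Finset.range r, φ ^ i) * (φ - 1) < φ ^ r * (φ - 1) := by
    linarith [geom_sum_mul φ r]
  exact lt_of_mul_lt_mul_right h4 (by linarith)

/-- `φ ^ k` times the length of the cell whose reversed digit string is `b`. -/
noncomputable def gap (φ : ℝ) (b : ℕ → ℕ) : ℝ :=
  φ ^ firstZero b - ∑ i ∈ Finset.range (firstZero b), φ ^ i

lemma Admissible.gap_pos (hφ : IsPhi m φ) {b : ℕ → ℕ} (hb : Admissible m b) : 0 < gap φ b :=
  sub_pos.mpr (hφ.sum_range_pow_lt hb.firstZero_lt)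

noncomputable def cellStart (m : ℕ) (φ : ℝ) (t : ℕ) : ℝ :=
  ∑ s ∈ Finset.range t, gap φ (odometer m s)

lemma cellStart_succ (m : ℕ) (φ : ℝ) (t : ℕ) :
    cellStart m φ (t + 1) = cellStart m φ t + gap φ (odometer m t) :=
  Finset.sum_range_succ _ _

lemma monotone_cellStart (hm : 2 ≤ m) (hφ : IsPhi m φ) : Monotone (cellStart m φ) :=
  monotone_nat_of_le_succ fun t => by
    rw [cellStart_succ]
    linarith [(admissible_odometer hm t).1.gap_pos hφ]

lemma digitVal_pow_odometer (hm : 2 ≤ m) (hφ : IsPhi m φ) {t K : ℕ}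
    (hK : ∀ j, K ≤ j → odometer m t j = 0) :
    digitVal (φ ^ ·) (odometer m t) K = cellStart m φ t := by
  suffices ∀ t K, t ≤ K → digitVal (φ ^ ·) (odometer m t) K = cellStart m φ t by
    rw [← digitVal_of_le hK (Nat.le_add_right K t), this t _ (by omega)]
  intro t K htK
  induction t generalizing K with
  | zero => simp [odometer, digitVal, cellStart]
  | succ t ih =>
    obtain ⟨hb, hsupp⟩ := admissible_odometer hm t
    have h := digitVal_succDigits_add (a := (φ ^ ·)) hφ.pow_add_eq_sum hb
      (K := K) (by have := carryPos_le hm hb hsupp; omega)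
    rw [ih K (by omega), ← odometer_succ] at h
    rw [cellStart_succ, gap]
    linarith

lemma cellStart_F (hm : 2 ≤ m) (hφ : IsPhi m φ) (k : ℕ) : cellStart m φ (F m k) = φ ^ k := by
  rw [← digitVal_pow_odometer hm hφ (K := k + 1), odometer_F hm]
  · simp [digitVal, Finset.sum_ite_eq']
  · intro j hj
    rw [odometer_F hm]
    exact if_neg (by omega)

end Phi

def revDigits (k : ℕ) (b : ℕ → ℕ) : ℕ → ℕ := fun j => if j < k then b (k - 1 - j) else 0

section Reverse

variable {k : ℕ} {b : ℕ → ℕ}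

lemma revDigits_eq_zero {j : ℕ} (hj : k ≤ j) : revDigits k b j = 0 :=
  if_neg (by omega)

lemma revDigits_revDigits (hb : ∀ j, k ≤ j → b j = 0) : revDigits k (revDigits k b) = b := by
  funext j
  by_cases h : j < k
  · simp [revDigits, h, show k - 1 - j < k by omega, show k - 1 - (k - 1 - j) = j by omega]
  · simp [revDigits, h, hb j (by omega)]

lemma Admissible.revDigits {m : ℕ} (hb : Admissible m b) : Admissible m (revDigits k b) := by
  refine ⟨fun j => by unfold Mbon.revDigits; split_ifs <;> simp [hb.1], fun j hrun => ?_⟩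
  have htop : j + (m - 1) < k := by
    by_contra h
    have := hrun (m - 1) (by have := hb.pos; omega)
    rw [revDigits_eq_zero (by omega)] at this
    omega
  refine hb.2 (k - j - m) fun i hi => ?_
  have := hrun (m - 1 - i) (by omega)
  rwa [Mbon.revDigits, if_pos (by omega), show k - 1 - (j + (m - 1 - i)) = k - j - m + i by omega]
    at this

lemma muk_eq_digitVal_revDigits (φ : ℝ) : muk φ b k = digitVal (φ ^ ·) (revDigits k b) k :=
  Finset.sum_congr rfl fun j hj => by simp [revDigits, Finset.mem_range.mp hj]

lemma firstZero_eq {r : ℕ} (h0 : b r = 0) (h1 : ∀ i < r, b i ≠ 0) : firstZero b = r :=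
  le_antisymm (Nat.sInf_le h0) (le_csInf ⟨r, h0⟩ fun j hj => not_lt.mp fun h => h1 j h hj)

lemma RunLen.firstZero_revDigits {m r : ℕ} (h : RunLen m b k r) :
    firstZero (revDigits k b) = r := by
  obtain ⟨-, hones, hzero⟩ := h
  have hrk : r ≤ k := by
    by_contra hkr
    have := hones (k + 1) (by omega) (by omega)
    simp [digZ] at this
  refine firstZero_eq ?_ fun i hi => ?_
  · rcases hrk.lt_or_eq with hlt | rfl
    · rw [revDigits, if_pos hlt]
      simpa only [digZ, show (0 : ℤ) ≤ k - r - 1 by omega, if_true,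
        show ((k : ℤ) - r - 1).toNat = k - 1 - r by omega] using hzero
    · exact revDigits_eq_zero le_rfl
  · have := hones (i + 1) (by omega) (by omega)
    rw [revDigits, if_pos (by omega)]
    simp only [digZ, show (0 : ℤ) ≤ k - ((i + 1 : ℕ) : ℤ) by omega, if_true,
      show ((k : ℤ) - ((i + 1 : ℕ) : ℤ)).toNat = k - 1 - i by omega] at this
    omega

end Reverse

/-- The interval `I(n)` for the digit string `w = ε n` and `r = r n`. -/
noncomputable def cell (φ : ℝ) (k : ℕ) (w : ℕ → ℕ) (r : ℕ) : Set ℝ :=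
  Set.Ico (muk φ w k / φ ^ k) ((muk φ w k + φ ^ r - ∑ i ∈ Finset.range r, φ ^ i) / φ ^ k)

lemma cell_revDigits_odometer {m k t r : ℕ} {φ : ℝ} (hm : 2 ≤ m) (hφ : IsPhi m φ)
    (ht : t < F m k) (hr : RunLen m (revDigits k (odometer m t)) k r) :
    cell φ k (revDigits k (odometer m t)) r =
      Set.Ico (cellStart m φ t / φ ^ k) (cellStart m φ (t + 1) / φ ^ k) := by
  have hsupp := fun j (hj : k ≤ j) => odometer_eq_zero_of_lt_F hm ht hj
  have hstart : muk φ (revDigits k (odometer m t)) k = cellStart m φ t := by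
    rw [muk_eq_digitVal_revDigits, revDigits_revDigits hsupp, digitVal_pow_odometer hm hφ hsupp]
  have hr' : firstZero (odometer m t) = r := by
    simpa only [revDigits_revDigits hsupp] using hr.firstZero_revDigits
  rw [cell, hstart, cellStart_succ, gap, hr', add_sub_assoc]

lemma pairwise_disjoint_and_biUnion_eq_of_bijOn {β : Type*} [LinearOrder β] {I : ℕ → Set β}
    {W : ℕ → β} {g : ℕ → ℕ} {N : ℕ} (hW : Monotone W)
    (hg : Set.BijOn g (Set.Iio N) (Set.Iio N)) (hI : ∀ t < N, I (g t) = Set.Ico (W t) (W (t + 1))) :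
    (∀ n n', n < N → n' < N → n ≠ n' → Disjoint (I n) (I n')) ∧
      ⋃ n ∈ Finset.range N, I n = Set.Ico (W 0) (W N) := by
  constructor
  · intro n n' hn hn' hne
    obtain ⟨t, ht, rfl⟩ := hg.surjOn hn
    obtain ⟨t', ht', rfl⟩ := hg.surjOn hn'
    rw [hI t ht, hI t' ht']
    exact hW.pairwise_disjoint_on_Ico_succ fun h => hne (h ▸ rfl)
  · have himage : (Finset.range N : Set ℕ) = g '' Set.Iio N := by
      rw [Finset.coe_range, hg.image_eq]
    rw [← Finset.set_biUnion_coe, himage, Set.biUnion_image]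
    refine subset_antisymm (Set.iUnion₂_subset fun t ht => ?_) ?_
    · rw [hI t ht]
      exact Set.Ico_subset_Ico (hW (Nat.zero_le t)) (hW ht)
    · refine (Ico_subset_biUnion_Ico N W).trans (Set.iUnion₂_subset fun t ht => ?_)
      have ht : t < N := Finset.mem_range.mp ht
      rw [← hI t ht]
      exact Set.subset_biUnion_of_mem (u := fun t => I (g t)) ht

section Enumeration

variable {m : ℕ}

lemma isGreedy_revDigits_odometer (hm : 2 ≤ m) (k t : ℕ) :
    IsGreedy m (digitVal (F m) (revDigits k (odometer m t)) k) (revDigits k (odometer m t)) :=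
  isGreedy_of_admissible (admissible_odometer hm t).1.revDigits fun _ => revDigits_eq_zero

lemma bijOn_digitVal_revDigits_odometer (hm : 2 ≤ m) (k : ℕ) :
    Set.BijOn (fun t => digitVal (F m) (revDigits k (odometer m t)) k)
      (Set.Iio (F m k)) (Set.Iio (F m k)) := by
  have hmaps : Set.MapsTo (fun t => digitVal (F m) (revDigits k (odometer m t)) k)
      (Set.Iio (F m k)) (Set.Iio (F m k)) := fun t _ =>
    (admissible_odometer hm t).1.revDigits.digitVal_lt k
  refine ((Set.finite_Iio _).injOn_iff_bijOn_of_mapsTo hmaps).mp fun t ht t' ht' h => ?_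
  have hrev := (isGreedy_revDigits_odometer hm k t).unique
    ((congrArg (IsGreedy m · _) h).mpr (isGreedy_revDigits_odometer hm k t'))
  apply odometer_injective hm
  rw [← revDigits_revDigits (k := k) fun _ => odometer_eq_zero_of_lt_F hm ht, hrev,
    revDigits_revDigits fun _ => odometer_eq_zero_of_lt_F hm ht']

end Enumeration

/-- Lemma 3.3: the collection of intervals
`I(n) = [μ_k(n)/φ^k, (μ_k(n)+φ^{r(n)}-Σ_{i<r(n)}φ^i)/φ^k)`, `0 ≤ n < F_k^{(m)}`,
forms a partition of `[0,1)`. -/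
theorem stmt3 (m : ℕ) (hm : 2 ≤ m) (k : ℕ) (φ : ℝ) (hφ : IsPhi m φ)
    (ε : ℕ → ℕ → ℕ) (hε : ∀ n, IsGreedy m n (ε n))
    (r : ℕ → ℕ) (hr : ∀ n, n < F m k → RunLen m (ε n) k (r n)) :
    (∀ n n', n < F m k → n' < F m k → n ≠ n' →
      Disjoint
        (Set.Ico (muk φ (ε n) k / φ ^ k)
          ((muk φ (ε n) k + φ ^ (r n) - ∑ i ∈ Finset.range (r n), φ ^ i) / φ ^ k))
        (Set.Ico (muk φ (ε n') k / φ ^ k)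
          ((muk φ (ε n') k + φ ^ (r n') - ∑ i ∈ Finset.range (r n'), φ ^ i) / φ ^ k))) ∧
    (⋃ n ∈ Finset.range (F m k),
        Set.Ico (muk φ (ε n) k / φ ^ k)
          ((muk φ (ε n) k + φ ^ (r n) - ∑ i ∈ Finset.range (r n), φ ^ i) / φ ^ k)) =
      Set.Ico (0 : ℝ) 1 := by
  set g : ℕ → ℕ := fun t => digitVal (F m) (revDigits k (odometer m t)) k
  have hg : Set.BijOn g (Set.Iio (F m k)) (Set.Iio (F m k)) :=
    bijOn_digitVal_revDigits_odometer hm k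
  have hεg : ∀ t, ε (g t) = revDigits k (odometer m t) := fun t =>
    (hε _).unique (isGreedy_revDigits_odometer hm k t)
  have hcells : ∀ t < F m k, cell φ k (ε (g t)) (r (g t)) =
      Set.Ico (cellStart m φ t / φ ^ k) (cellStart m φ (t + 1) / φ ^ k) := fun t ht => by
    have hrt := hr _ (hg.mapsTo ht)
    rw [hεg t] at hrt ⊢
    exact cell_revDigits_odometer hm hφ ht hrt
  have hφk : 0 < φ ^ k := pow_pos (zero_lt_one.trans hφ.1) k
  obtain ⟨hdisj, hunion⟩ :=
    pairwise_disjoint_and_biUnion_eq_of_bijOn (I := fun n => cell φ k (ε n) (r n))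
      (fun _ _ h => div_le_div_of_nonneg_right (monotone_cellStart hm hφ h) hφk.le) hg hcells
  refine ⟨hdisj, hunion.trans ?_⟩
  rw [cellStart_F hm hφ, div_self hφk.ne', cellStart, Finset.sum_range_zero, zero_div]

end Mbon
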